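/- Let V = ℝᵐ with m divisible by 4 and quaternionic structure J₁,J₂,J₃, and let A = c₄A₀ + (c₁−a₀)J₁A_{J₁} + (c₂−a₀)J₂A_{J₂} + (c₃−a₀)J₃A_{J₃} + a₁J₁(A₀ − J₁A_{J₁}) + a₂J₁(J₂A_{J₂} + J₃A_{J₃}) with a₁ = a₂ = 0 and a₀ = c₄. Then for any unit vector X the Jacobi operator J_X^A is diagonalizable with J_X^A(X) = 0, J_X^A(JᵢX) = cᵢJᵢX for i = 1,2,3, and J_X^A(Y) = c₄Y for Y ⟂ {X, J₁X, J₂X, J₃X}. -/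

import Mathlib

/-!
For a unit vector `X` the vectors `X, J₁X, J₂X, J₃X` are orthonormal, and each term of `A`
contributes a rank-one piece to the Jacobi operator: `A₀(Y,X)X = Y - ⟪X,Y⟫X` and
`J(A_J(Y,X)X) = ⟪JX,Y⟫JX`. Hence `J_X^A = c₄(1 - π_X) + Σᵢ (cᵢ - c₄) π_{JᵢX}`, with `π_v` the
orthogonal projection onto `ℝv`, whose eigenvectors can be read off.
-/

open RealInnerProductSpace

/-- The constant sectional curvature operator `A₀(X,Y)Z = ⟪Y,Z⟫X - ⟪X,Z⟫Y`. -/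
noncomputable def A0op {V : Type*} [NormedAddCommGroup V] [InnerProductSpace ℝ V]
    (X Y Z : V) : V :=
  ⟪Y, Z⟫ • X - ⟪X, Z⟫ • Y

/-- The operator `A_J(X,Y)Z = (1/3)(⟪JY,Z⟫X - ⟪JX,Z⟫Y - 2⟪JX,Y⟫Z)`. -/
noncomputable def AJop {V : Type*} [NormedAddCommGroup V] [InnerProductSpace ℝ V]
    (J : V →ₗ[ℝ] V) (X Y Z : V) : V :=
  (1/3 : ℝ) • (⟪J Y, Z⟫ • X - ⟪J X, Z⟫ • Y - (2 : ℝ) • ⟪J X, Y⟫ • Z)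

variable {V : Type*} [NormedAddCommGroup V] [InnerProductSpace ℝ V]

structure IsOrthComplexStructure (J : V →ₗ[ℝ] V) : Prop where
  apply_apply : ∀ x, J (J x) = -x
  inner_map_map : ∀ x y, ⟪J x, J y⟫ = ⟪x, y⟫

namespace IsOrthComplexStructure

variable {J K : V →ₗ[ℝ] V}

theorem inner_map_left (hJ : IsOrthComplexStructure J) (x y : V) :
    ⟪J x, y⟫ = -⟪x, J y⟫ := by
  rw [← hJ.inner_map_map x (J y), hJ.apply_apply, inner_neg_right, neg_neg]

theorem inner_map_self_left (hJ : IsOrthComplexStructure J) (x : V) : ⟪J x, x⟫ = 0 := by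
  have h := hJ.inner_map_left x x
  rw [real_inner_comm (J x) x] at h
  linarith

theorem inner_self_map_right (hJ : IsOrthComplexStructure J) (x : V) : ⟪x, J x⟫ = 0 := by
  rw [real_inner_comm, hJ.inner_map_self_left]

theorem comp (hJ : IsOrthComplexStructure J) (hK : IsOrthComplexStructure K)
    (hJK : ∀ x, J (K x) = -K (J x)) : IsOrthComplexStructure (J ∘ₗ K) where
  apply_apply x := by
    simp only [LinearMap.comp_apply, hJK, map_neg, hJ.apply_apply, hK.apply_apply, neg_neg]
  inner_map_map x y := by
    simp only [LinearMap.comp_apply, hJ.inner_map_map, hK.inner_map_map]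

theorem inner_map_map_self_of_anticomm (hJ : IsOrthComplexStructure J)
    (hK : IsOrthComplexStructure K) (hJK : ∀ x, J (K x) = -K (J x)) (x : V) :
    ⟪J x, K x⟫ = 0 := by
  have h₁ := hJ.inner_map_left x (K x)
  have h₂ := hK.inner_map_left x (J x)
  rw [hJK, inner_neg_right, neg_neg] at h₁
  rw [real_inner_comm] at h₂
  linarith

theorem inner_comp_self_left_of_anticomm (hJ : IsOrthComplexStructure J)
    (hK : IsOrthComplexStructure K) (hJK : ∀ x, J (K x) = -K (J x)) (x : V) :
    ⟪J (K x), x⟫ = 0 :=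
  (hJ.comp hK hJK).inner_map_self_left x

theorem inner_self_comp_right_of_anticomm (hJ : IsOrthComplexStructure J)
    (hK : IsOrthComplexStructure K) (hJK : ∀ x, J (K x) = -K (J x)) (x : V) :
    ⟪x, J (K x)⟫ = 0 :=
  (hJ.comp hK hJK).inner_self_map_right x

theorem map_AJop_self_self (hJ : IsOrthComplexStructure J) (X Y : V) :
    J (AJop J Y X X) = ⟪J X, Y⟫ • J X := by
  simp only [AJop, hJ.inner_map_self_left, hJ.inner_map_left Y X, real_inner_comm Y, map_smul,
    map_sub, map_neg, zero_smul, zero_sub]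
  module

end IsOrthComplexStructure

theorem A0op_self_self (X Y : V) : A0op Y X X = ⟪X, X⟫ • Y - ⟪X, Y⟫ • X := by
  rw [A0op, real_inner_comm X Y]

theorem jacobi_eq_sum_projections {J₁ J₂ : V →ₗ[ℝ] V} {c₁ c₂ c₃ c₄ : ℝ}
    {A : V → V → V → V} {X : V} (h₁ : IsOrthComplexStructure J₁)
    (h₂ : IsOrthComplexStructure J₂) (hanti : ∀ x, J₁ (J₂ x) = -J₂ (J₁ x))
    (hA : ∀ X Y Z, A X Y Z = c₄ • A0op X Y Z
      + (c₁ - c₄) • J₁ (AJop J₁ X Y Z)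
      + (c₂ - c₄) • J₂ (AJop J₂ X Y Z)
      + (c₃ - c₄) • (J₁ ∘ₗ J₂) (AJop (J₁ ∘ₗ J₂) X Y Z))
    (hX : ⟪X, X⟫ = 1) (Y : V) :
    A Y X X = c₄ • (Y - ⟪X, Y⟫ • X) + ((c₁ - c₄) * ⟪J₁ X, Y⟫) • J₁ X
      + ((c₂ - c₄) * ⟪J₂ X, Y⟫) • J₂ X + ((c₃ - c₄) * ⟪J₁ (J₂ X), Y⟫) • J₁ (J₂ X) := by
  rw [hA, h₁.map_AJop_self_self, h₂.map_AJop_self_self, (h₁.comp h₂ hanti).map_AJop_self_self,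
    A0op_self_self, hX, one_smul, LinearMap.comp_apply]
  module

theorem stmt19_general {m : ℕ}
    (J₁ J₂ : EuclideanSpace ℝ (Fin m) →ₗ[ℝ] EuclideanSpace ℝ (Fin m))
    (hJ₁2 : ∀ x, J₁ (J₁ x) = -x)
    (hJ₂2 : ∀ x, J₂ (J₂ x) = -x)
    (hJ₁i : ∀ x y, ⟪J₁ x, J₁ y⟫ = ⟪x, y⟫)
    (hJ₂i : ∀ x y, ⟪J₂ x, J₂ y⟫ = ⟪x, y⟫)
    (hanti : ∀ x, J₁ (J₂ x) = -J₂ (J₁ x))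
    (a₀ a₁ a₂ c₁ c₂ c₃ c₄ : ℝ)
    (ha₁ : a₁ = 0) (ha₂ : a₂ = 0) (ha₀ : a₀ = c₄)
    (A : EuclideanSpace ℝ (Fin m) → EuclideanSpace ℝ (Fin m) → EuclideanSpace ℝ (Fin m) →
      EuclideanSpace ℝ (Fin m))
    (hA : ∀ X Y Z, A X Y Z =
      c₄ • A0op X Y Z
      + (c₁ - a₀) • J₁ (AJop J₁ X Y Z)
      + (c₂ - a₀) • J₂ (AJop J₂ X Y Z)
      + (c₃ - a₀) • (J₁ ∘ₗ J₂) (AJop (J₁ ∘ₗ J₂) X Y Z)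
      + a₁ • J₁ (A0op X Y Z - J₁ (AJop J₁ X Y Z))
      + a₂ • J₁ (J₂ (AJop J₂ X Y Z) + (J₁ ∘ₗ J₂) (AJop (J₁ ∘ₗ J₂) X Y Z)))
    (X : EuclideanSpace ℝ (Fin m)) (hX : ‖X‖ = 1) :
    A X X X = 0 ∧
    A (J₁ X) X X = c₁ • J₁ X ∧
    A (J₂ X) X X = c₂ • J₂ X ∧
    A (J₁ (J₂ X)) X X = c₃ • J₁ (J₂ X) ∧
    ∀ Y, ⟪X, Y⟫ = 0 → ⟪J₁ X, Y⟫ = 0 → ⟪J₂ X, Y⟫ = 0 → ⟪J₁ (J₂ X), Y⟫ = 0 →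
      A Y X X = c₄ • Y := by
  subst ha₁ ha₂ a₀
  have h₁ : IsOrthComplexStructure J₁ := ⟨hJ₁2, hJ₁i⟩
  have h₂ : IsOrthComplexStructure J₂ := ⟨hJ₂2, hJ₂i⟩
  have hXX : ⟪X, X⟫ = 1 := by rw [real_inner_self_eq_norm_sq, hX, one_pow]
  have jacobi := jacobi_eq_sum_projections (c₁ := c₁) (c₂ := c₂) (c₃ := c₃)
    (c₄ := c₄) (A := A) h₁ h₂ hanti (fun X Y Z => by simp only [hA, zero_smul, add_zero]) hXX
  have h₂₁ : ∀ x, J₂ (J₁ x) = -J₁ (J₂ x) := fun x => by rw [hanti, neg_neg]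
  refine ⟨?_, ?_, ?_, ?_, fun Y h₀ h₁' h₂' h₃ => by rw [jacobi, h₀, h₁', h₂', h₃]; module⟩ <;>
    simp only [jacobi, hXX, h₁.inner_map_map, h₂.inner_map_map, h₁.inner_map_self_left,
      h₂.inner_map_self_left, h₁.inner_self_map_right, h₂.inner_self_map_right,
      h₁.inner_map_map_self_of_anticomm h₂ hanti, h₂.inner_map_map_self_of_anticomm h₁ h₂₁,
      h₁.inner_comp_self_left_of_anticomm h₂ hanti,
      h₁.inner_self_comp_right_of_anticomm h₂ hanti] <;>
    module

/-- Let `V = ℝᵐ` with `4 ∣ m` carry a quaternionic structure `J₁, J₂, J₃ = J₁J₂`, and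
let `A = c₄A₀ + (c₁-a₀)J₁A_{J₁} + (c₂-a₀)J₂A_{J₂} + (c₃-a₀)J₃A_{J₃}
+ a₁J₁(A₀ - J₁A_{J₁}) + a₂J₁(J₂A_{J₂} + J₃A_{J₃})` with `a₁ = a₂ = 0` and `a₀ = c₄`.
Then for any unit vector `X`: `J_X^A(X) = 0`, `J_X^A(JᵢX) = cᵢ JᵢX` for `i = 1,2,3`,
and `J_X^A(Y) = c₄ Y` for `Y ⟂ {X, J₁X, J₂X, J₃X}` (so `J_X^A` is diagonalizable). -/
theorem stmt19 {m : ℕ} (hm : 4 ∣ m)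
    (J₁ J₂ : EuclideanSpace ℝ (Fin m) →ₗ[ℝ] EuclideanSpace ℝ (Fin m))
    (hJ₁2 : ∀ x, J₁ (J₁ x) = -x)
    (hJ₂2 : ∀ x, J₂ (J₂ x) = -x)
    (hJ₁i : ∀ x y, ⟪J₁ x, J₁ y⟫ = ⟪x, y⟫)
    (hJ₂i : ∀ x y, ⟪J₂ x, J₂ y⟫ = ⟪x, y⟫)
    (hanti : ∀ x, J₁ (J₂ x) = -J₂ (J₁ x))
    (a₀ a₁ a₂ c₁ c₂ c₃ c₄ : ℝ)
    (ha₁ : a₁ = 0) (ha₂ : a₂ = 0) (ha₀ : a₀ = c₄)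
    (A : EuclideanSpace ℝ (Fin m) → EuclideanSpace ℝ (Fin m) → EuclideanSpace ℝ (Fin m) →
      EuclideanSpace ℝ (Fin m))
    (hA : ∀ X Y Z, A X Y Z =
      c₄ • A0op X Y Z
      + (c₁ - a₀) • J₁ (AJop J₁ X Y Z)
      + (c₂ - a₀) • J₂ (AJop J₂ X Y Z)
      + (c₃ - a₀) • (J₁ ∘ₗ J₂) (AJop (J₁ ∘ₗ J₂) X Y Z)
      + a₁ • J₁ (A0op X Y Z - J₁ (AJop J₁ X Y Z))
      + a₂ • J₁ (J₂ (AJop J₂ X Y Z) + (J₁ ∘ₗ J₂) (AJop (J₁ ∘ₗ J₂) X Y Z)))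
    (X : EuclideanSpace ℝ (Fin m)) (hX : ‖X‖ = 1) :
    A X X X = 0 ∧
    A (J₁ X) X X = c₁ • J₁ X ∧
    A (J₂ X) X X = c₂ • J₂ X ∧
    A (J₁ (J₂ X)) X X = c₃ • J₁ (J₂ X) ∧
    ∀ Y, ⟪X, Y⟫ = 0 → ⟪J₁ X, Y⟫ = 0 → ⟪J₂ X, Y⟫ = 0 → ⟪J₁ (J₂ X), Y⟫ = 0 →
      A Y X X = c₄ • Y :=
  stmt19_general J₁ J₂ hJ₁2 hJ₂2 hJ₁i hJ₂i hanti a₀ a₁ a₂ c₁ c₂ c₃ c₄ ha₁ ha₂ ha₀ A hA X hX
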